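/- arXiv:1609.04107 — 3 statements merged into one kernel-verified Lean document; each statement's English description precedes it below -/
import Mathlib

section
/- Let A,B,C,D,E,F,β,γ be real numbers such that (2βγC + D + Eγ + Fβ)^2 − 4(A + Cβ^2 + Eβ)(B + Cγ^2 + Fγ) ≠ 0. Then the 2×3 matrix [[2A+Eβ, D+Fβ, E+2Cβ],[D+Eγ, 2B+Fγ, F+2Cγ]] has rank 2. -/
open Matrix

/-- If `(2βγC + D + Eγ + Fβ)² − 4(A + Cβ² + Eβ)(B + Cγ² + Fγ) ≠ 0`, then the 2×3 matrix
`[[2A+Eβ, D+Fβ, E+2Cβ], [D+Eγ, 2B+Fγ, F+2Cγ]]` has rank 2. -/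
theorem stmt6 (A B C D E F β γ : ℝ)
    (h : (2 * β * γ * C + D + E * γ + F * β) ^ 2
        - 4 * (A + C * β ^ 2 + E * β) * (B + C * γ ^ 2 + F * γ) ≠ 0) :
    (Matrix.of ![![2 * A + E * β, D + F * β, E + 2 * C * β],
      ![D + E * γ, 2 * B + F * γ, F + 2 * C * γ]]).rank = 2 := by
  set M : Matrix (Fin 2) (Fin 3) ℝ :=
    Matrix.of ![![2 * A + E * β, D + F * β, E + 2 * C * β],
      ![D + E * γ, 2 * B + F * γ, F + 2 * C * γ]] with hM
  set K : Matrix (Fin 3) (Fin 2) ℝ := Matrix.of ![![1, 0], ![0, 1], ![β, γ]] with hK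
  have hdet : (M * K).det ≠ 0 := by
    have : (M * K).det =
        -((2 * β * γ * C + D + E * γ + F * β) ^ 2
          - 4 * (A + C * β ^ 2 + E * β) * (B + C * γ ^ 2 + F * γ)) := by
      simp [hM, hK, Matrix.det_fin_two, Matrix.mul_apply, Fin.sum_univ_three]
      ring
    rw [this]
    exact neg_ne_zero.mpr h
  have h1 : (M * K).rank = 2 := by
    rw [Matrix.rank_of_isUnit _ ((Matrix.isUnit_iff_isUnit_det _).mpr hdet.isUnit)]
    simp
  have h2 : M.rank ≤ 2 := by
    simpa using M.rank_le_card_height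
  exact le_antisymm h2 (h1 ▸ Matrix.rank_mul_le_left M K)
end

section
/- Let Q1, Q2 be quadratic forms on R^3 satisfying the nondegeneracy condition (for every nonzero (u,v,w), det[∇Q1; ∇Q2; (u,v,w)] is not the zero polynomial). For any one-dimensional subspace V ⊂ R^5, the set {ξ ∈ R^3 : the orthogonal projection of V onto the tangent space V_ξ of the surface S = {(r,s,t,Q1,Q2)} at ξ is zero} is contained in the zero set of a nonzero polynomial of degree at most 2. -/
/-!
Pick `v ≠ 0` in `V`. The projection of `V` onto `V_ξ` vanishes iff `⟪n_i(ξ), v⟫ = 0` for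
`i = 1, 2, 3`; each of these is affine in `ξ`, so the sum of their squares is a polynomial of degree
at most 2 vanishing on the set. It is not the zero polynomial: at `ξ = 0` the `n_i` are the first
three coordinate vectors, forcing `v₁ = v₂ = v₃ = 0`, and then `v₄ ∇Q₁ + v₅ ∇Q₂ ≡ 0` makes the first
two rows of the nondegeneracy determinant dependent, so `(v₄, v₅) = 0`.
-/

open Matrix

/-- The three tangent vectors `n₁(ξ), n₂(ξ), n₃(ξ)` of the surface
`(r,s,t,Q₁(r,s,t),Q₂(r,s,t))` at the point `ξ`, where `Q_i(v) = v ⬝ A_i v`. -/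
noncomputable def tangentVec (A₁ A₂ : Matrix (Fin 3) (Fin 3) ℝ) (ξ : Fin 3 → ℝ) :
    Fin 3 → EuclideanSpace ℝ (Fin 5) :=
  ![(WithLp.toLp 2 ![1, 0, 0, ((2 : ℝ) • A₁.mulVec ξ) 0, ((2 : ℝ) • A₂.mulVec ξ) 0] :
      EuclideanSpace ℝ (Fin 5)),
    WithLp.toLp 2 ![0, 1, 0, ((2 : ℝ) • A₁.mulVec ξ) 1, ((2 : ℝ) • A₂.mulVec ξ) 1],
    WithLp.toLp 2 ![0, 0, 1, ((2 : ℝ) • A₁.mulVec ξ) 2, ((2 : ℝ) • A₂.mulVec ξ) 2]]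

/-- The tangent space to the surface `(r,s,t,Q₁,Q₂)` at `ξ`, as a subspace of `ℝ⁵`. -/
noncomputable def tangentSpace (A₁ A₂ : Matrix (Fin 3) (Fin 3) ℝ) (ξ : Fin 3 → ℝ) :
    Submodule ℝ (EuclideanSpace ℝ (Fin 5)) :=
  Submodule.span ℝ (Set.range (tangentVec A₁ A₂ ξ))

/-- The nondegeneracy condition of Theorem 1.1: for every nonzero `(u,v,w)`, the determinant
of the matrix with rows `∇Q₁(ξ), ∇Q₂(ξ), (u,v,w)` is not the zero polynomial in `ξ`. -/
def NondegCond (A₁ A₂ : Matrix (Fin 3) (Fin 3) ℝ) : Prop :=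
  ∀ x : Fin 3 → ℝ, x ≠ 0 →
    ∃ ξ : Fin 3 → ℝ,
      (Matrix.of ![(2 : ℝ) • A₁.mulVec ξ, (2 : ℝ) • A₂.mulVec ξ, x]).det ≠ 0

open MvPolynomial
open scoped RealInnerProductSpace

lemma inner_tangentVec (A₁ A₂ : Matrix (Fin 3) (Fin 3) ℝ) (ξ : Fin 3 → ℝ)
    (v : EuclideanSpace ℝ (Fin 5)) (i : Fin 3) :
    ⟪tangentVec A₁ A₂ ξ i, v⟫ =
      v (Fin.castLE (by norm_num) i) + 2 * v 3 * (A₁ *ᵥ ξ) i + 2 * v 4 * (A₂ *ᵥ ξ) i := by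
  fin_cases i <;> simp [tangentVec, PiLp.inner_apply, Fin.sum_univ_five] <;> ring

lemma eq_zero_of_forall_inner_tangentVec_eq_zero {A₁ A₂ : Matrix (Fin 3) (Fin 3) ℝ}
    (hnd : NondegCond A₁ A₂) {v : EuclideanSpace ℝ (Fin 5)}
    (h : ∀ ξ i, ⟪tangentVec A₁ A₂ ξ i, v⟫ = 0) : v = 0 := by
  simp only [inner_tangentVec] at h
  have hlow : ∀ i : Fin 3, v (Fin.castLE (by norm_num) i) = 0 := fun i => by
    simpa using h 0 i
  have hrel : ∀ ξ, v 3 • (2 : ℝ) • A₁ *ᵥ ξ + v 4 • (2 : ℝ) • A₂ *ᵥ ξ = 0 := fun ξ => by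
    ext i
    have := h ξ i
    simp only [hlow, zero_add] at this
    simp only [Pi.add_apply, Pi.smul_apply, smul_eq_mul, Pi.zero_apply]
    linarith
  by_contra hv
  have hw : ![v 3, v 4, 0] ≠ 0 := fun hw => hv <| by
    ext k
    fin_cases k
    exacts [hlow 0, hlow 1, hlow 2, by simpa using congrFun hw 0, by simpa using congrFun hw 1]
  obtain ⟨ξ, hdet⟩ := hnd ![1, 0, 0] (by simp)
  refine hdet (Matrix.exists_vecMul_eq_zero_iff.mp ⟨_, hw, ?_⟩)
  rw [← hrel ξ]
  ext j
  simp [vecMul, dotProduct, Fin.sum_univ_three]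

noncomputable def tangentPairing (A₁ A₂ : Matrix (Fin 3) (Fin 3) ℝ) (v : EuclideanSpace ℝ (Fin 5))
    (i : Fin 3) : MvPolynomial (Fin 3) ℝ :=
  C (v (Fin.castLE (by norm_num) i)) + ∑ j, C (2 * v 3 * A₁ i j + 2 * v 4 * A₂ i j) * X j

lemma eval_tangentPairing (A₁ A₂ : Matrix (Fin 3) (Fin 3) ℝ) (v : EuclideanSpace ℝ (Fin 5))
    (i : Fin 3) (ξ : Fin 3 → ℝ) :
    eval ξ (tangentPairing A₁ A₂ v i) = ⟪tangentVec A₁ A₂ ξ i, v⟫ := by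
  simp only [tangentPairing, inner_tangentVec, mulVec, dotProduct, map_add, map_sum, map_mul,
    eval_C, eval_X, Finset.mul_sum, ← Finset.sum_add_distrib, add_mul, add_assoc, mul_assoc]

lemma totalDegree_tangentPairing_le (A₁ A₂ : Matrix (Fin 3) (Fin 3) ℝ)
    (v : EuclideanSpace ℝ (Fin 5)) (i : Fin 3) : (tangentPairing A₁ A₂ v i).totalDegree ≤ 1 := by
  refine (totalDegree_add _ _).trans (max_le (by simp) (totalDegree_finsetSum_le fun j _ => ?_))
  exact (totalDegree_mul _ _).trans (by rw [totalDegree_C, totalDegree_X])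

noncomputable def tangentDefect (A₁ A₂ : Matrix (Fin 3) (Fin 3) ℝ) (v : EuclideanSpace ℝ (Fin 5)) :
    MvPolynomial (Fin 3) ℝ :=
  ∑ i, tangentPairing A₁ A₂ v i ^ 2

lemma eval_tangentDefect_eq_zero_iff (A₁ A₂ : Matrix (Fin 3) (Fin 3) ℝ)
    (v : EuclideanSpace ℝ (Fin 5)) (ξ : Fin 3 → ℝ) :
    eval ξ (tangentDefect A₁ A₂ v) = 0 ↔ ∀ i, ⟪tangentVec A₁ A₂ ξ i, v⟫ = 0 := by
  simp only [tangentDefect, map_sum, map_pow, eval_tangentPairing,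
    Finset.sum_eq_zero_iff_of_nonneg fun _ _ => sq_nonneg _, Finset.mem_univ, true_implies,
    sq_eq_zero_iff]

lemma totalDegree_tangentDefect_le (A₁ A₂ : Matrix (Fin 3) (Fin 3) ℝ)
    (v : EuclideanSpace ℝ (Fin 5)) : (tangentDefect A₁ A₂ v).totalDegree ≤ 2 :=
  totalDegree_finsetSum_le fun i _ =>
    (totalDegree_pow _ _).trans (by linarith [totalDegree_tangentPairing_le A₁ A₂ v i])

lemma tangentDefect_ne_zero {A₁ A₂ : Matrix (Fin 3) (Fin 3) ℝ} (hnd : NondegCond A₁ A₂)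
    {v : EuclideanSpace ℝ (Fin 5)} (hv : v ≠ 0) : tangentDefect A₁ A₂ v ≠ 0 := fun h =>
  hv <| eq_zero_of_forall_inner_tangentVec_eq_zero hnd fun ξ =>
    (eval_tangentDefect_eq_zero_iff A₁ A₂ v ξ).mp (by rw [h, map_zero])

theorem stmt12_general (A₁ A₂ : Matrix (Fin 3) (Fin 3) ℝ)
    (hnd : NondegCond A₁ A₂)
    (V : Submodule ℝ (EuclideanSpace ℝ (Fin 5))) (hV : Module.finrank ℝ V = 1) :
    ∃ p : MvPolynomial (Fin 3) ℝ, p ≠ 0 ∧ p.totalDegree ≤ 2 ∧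
      ∀ ξ : Fin 3 → ℝ,
        V.map (Submodule.orthogonalProjectionOnto (tangentSpace A₁ A₂ ξ)).toLinearMap = ⊥ →
          MvPolynomial.eval ξ p = 0 := by
  obtain ⟨v, hvV, hv⟩ := (Submodule.ne_bot_iff V).mp (Submodule.one_le_finrank_iff.mp hV.ge)
  refine ⟨tangentDefect A₁ A₂ v, tangentDefect_ne_zero hnd hv,
    totalDegree_tangentDefect_le A₁ A₂ v, fun ξ hξ => ?_⟩
  have hproj : Submodule.orthogonalProjectionOnto (tangentSpace A₁ A₂ ξ) v = 0 := by
    simpa [hξ] using Submodule.mem_map_of_mem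
      (f := (Submodule.orthogonalProjectionOnto (tangentSpace A₁ A₂ ξ)).toLinearMap) hvV
  have hperp := Submodule.orthogonalProjectionOnto_eq_zero_iff.mp hproj
  exact (eval_tangentDefect_eq_zero_iff A₁ A₂ v ξ).mpr fun i =>
    (Submodule.mem_orthogonal _ _).mp hperp _ (Submodule.subset_span ⟨i, rfl⟩)

/-- For a one-dimensional subspace `V ⊂ ℝ⁵`, the set of points `ξ` where the orthogonal
projection of `V` onto the tangent space of the surface at `ξ` is zero is contained in the
zero set of a nonzero polynomial of degree at most 2. -/
theorem stmt12 (A₁ A₂ : Matrix (Fin 3) (Fin 3) ℝ) (hA₁ : A₁.IsSymm) (hA₂ : A₂.IsSymm)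
    (hnd : NondegCond A₁ A₂)
    (V : Submodule ℝ (EuclideanSpace ℝ (Fin 5))) (hV : Module.finrank ℝ V = 1) :
    ∃ p : MvPolynomial (Fin 3) ℝ, p ≠ 0 ∧ p.totalDegree ≤ 2 ∧
      ∀ ξ : Fin 3 → ℝ,
        V.map (Submodule.orthogonalProjectionOnto (tangentSpace A₁ A₂ ξ)).toLinearMap = ⊥ →
          MvPolynomial.eval ξ p = 0 :=
  stmt12_general A₁ A₂ hnd V hV
end

section
/- Let Q1, Q2 be quadratic forms on R^3 satisfying the nondegeneracy condition of Theorem 1.1. For any two-dimensional subspace V ⊂ R^5, the set {ξ ∈ R^3 : dim(π_ξ(V)) ≤ 1} is contained in the zero set of a nonzero polynomial of degree at most 2, where π_ξ is the orthogonal projection onto the tangent space to the surface {(r,s,t,Q1,Q2)} at ξ. -/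
open Matrix

/-! Write `g_i(ξ) = 2 A_i ξ`. The tangent space at `ξ` is spanned by the rows of the `3 × 5`
matrix `N(ξ) = (I | g₁(ξ) | g₂(ξ))`, so `N(ξ)` vanishes on the orthogonal complement of the tangent
space and factors through the projection onto it. Hence if `V` projects to at most a line, `N(ξ)`
has rank at most one on `V = span {v, w}`, i.e. `N(ξ)v × N(ξ)w = 0`. The entries of `N(ξ)v` and
`N(ξ)w` are affine in `ξ`, so every component of this cross product is a polynomial of degree at
most two; it remains to see that the cross product is not identically zero.

If `z ↦ (z₃, z₄)` is injective on `V`, pick `v, w ∈ V` with `(v₃, v₄) = (1, 0)` and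
`(w₃, w₄) = (0, 1)`: the second difference of `ξ ↦ N(ξ)v × N(ξ)w` is `2 g₁(ξ) × g₂(ξ)`, which the
nondegeneracy condition makes nonzero somewhere. Otherwise `V` contains some `u ≠ 0` for which
`N(ξ)u = (u₀, u₁, u₂)` does not depend on `ξ`; the nondegeneracy condition in the direction of
this vector forces `z₃ = z₄ = 0` on all of `V`, and then `N(0)` is injective on `V`. -/

open MvPolynomial Module

lemma finrank_span_pair_le_one_iff {K : Type*} [Field K] (x y : Fin 3 → K) :
    finrank K (Submodule.span K {x, y}) ≤ 1 ↔ x ⨯₃ y = 0 := by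
  have hle : (Set.range ![x, y]).finrank K ≤ 2 := finrank_range_le_card _
  rw [← not_iff_not, not_le, ← ne_eq, crossProduct_ne_zero_iff_linearIndependent,
    linearIndependent_iff_card_eq_finrank_span, Fintype.card_fin]
  rw [Set.finrank, range_cons_cons_empty] at *
  omega

section

variable {K E : Type*} [Field K] [AddCommGroup E] [Module K E]

lemma Submodule.exists_ne_zero_map_eq_zero_or_finrank_map_eq {F : Type*} [AddCommGroup F]
    [Module K F] (V : Submodule K E) [FiniteDimensional K V] (f : E →ₗ[K] F) :
    (∃ u ∈ V, u ≠ 0 ∧ f u = 0) ∨ finrank K (V.map f) = finrank K V := by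
  by_cases h : ∃ u ∈ V, u ≠ 0 ∧ f u = 0
  · exact .inl h
  right
  push Not at h
  have hinj : Function.Injective (f ∘ₗ V.subtype) := by
    rw [← LinearMap.ker_eq_bot, LinearMap.ker_eq_bot']
    intro u hu
    by_contra hne
    exact h u u.2 (by simpa using hne) hu
  rw [← LinearMap.finrank_range_of_inj hinj, LinearMap.range_comp, Submodule.range_subtype]

lemma Submodule.exists_eq_span_pair_of_finrank_eq_two (V : Submodule K E)
    (h : finrank K V = 2) : ∃ v w : E, V = Submodule.span K {v, w} := by
  have : Module.Finite K V := Module.finite_of_finrank_eq_succ h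
  let b := Module.finBasisOfFinrankEq K V h
  refine ⟨b 0, b 1, ?_⟩
  have := congrArg (Submodule.map V.subtype) b.span_eq
  rw [Submodule.map_span, Submodule.map_top, Submodule.range_subtype, ← Set.range_comp] at this
  refine this.symm.trans (congrArg _ ?_)
  ext x
  simp [Fin.exists_fin_two, eq_comm]

end

noncomputable def affinePoly {R : Type*} [CommRing R] {m n : ℕ} (a : Fin n → R)
    (M : Matrix (Fin n) (Fin m) R) (i : Fin n) : MvPolynomial (Fin m) R :=
  C (a i) + ∑ j, C (M i j) * X j

section

variable {R : Type*} [CommRing R] {m n : ℕ}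

lemma eval_comp_affinePoly (a : Fin n → R) (M : Matrix (Fin n) (Fin m) R) (ξ : Fin m → R) :
    (eval ξ : MvPolynomial (Fin m) R →+* R) ∘ affinePoly a M = a + M *ᵥ ξ := by
  ext i
  simp [affinePoly, mulVec, dotProduct]

lemma totalDegree_affinePoly_le (a : Fin n → R) (M : Matrix (Fin n) (Fin m) R) (i : Fin n) :
    (affinePoly a M i).totalDegree ≤ 1 := by
  refine (totalDegree_add _ _).trans (max_le (by simp) ?_)
  refine (totalDegree_finsetSum _ _).trans (Finset.sup_le fun j _ => ?_)
  rw [C_mul_X_eq_monomial]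
  exact (totalDegree_monomial_le _ _).trans (by simp)

end

lemma RingHom.comp_cross {R S : Type*} [CommRing R] [CommRing S] (f : R →+* S)
    (u v : Fin 3 → R) : f ∘ (u ⨯₃ v) = (f ∘ u) ⨯₃ (f ∘ v) := by
  ext i
  fin_cases i <;> simp [cross_apply]

lemma totalDegree_cross_le {R σ : Type*} [CommRing R] {p q : Fin 3 → MvPolynomial σ R}
    {a b : ℕ} (hp : ∀ i, (p i).totalDegree ≤ a) (hq : ∀ i, (q i).totalDegree ≤ b) (i : Fin 3) :
    ((p ⨯₃ q) i).totalDegree ≤ a + b := by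
  have key : ∀ j k l o, (p j * q k - p l * q o).totalDegree ≤ a + b := fun j k l o =>
    (totalDegree_sub _ _).trans <| max_le
      ((totalDegree_mul _ _).trans (add_le_add (hp j) (hq k)))
      ((totalDegree_mul _ _).trans (add_le_add (hp l) (hq o)))
  fin_cases i <;> exact key _ _ _ _

noncomputable def tangentInner (A₁ A₂ : Matrix (Fin 3) (Fin 3) ℝ) (ξ : Fin 3 → ℝ) :
    EuclideanSpace ℝ (Fin 5) →ₗ[ℝ] Fin 3 → ℝ :=
  LinearMap.pi fun i => innerₗ _ (tangentVec A₁ A₂ ξ i)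

section

variable (A₁ A₂ : Matrix (Fin 3) (Fin 3) ℝ)

lemma tangentInner_apply (ξ : Fin 3 → ℝ) (z : EuclideanSpace ℝ (Fin 5)) :
    tangentInner A₁ A₂ ξ z
      = ![z 0, z 1, z 2] + z 3 • ((2 : ℝ) • A₁ *ᵥ ξ) + z 4 • ((2 : ℝ) • A₂ *ᵥ ξ) := by
  ext i
  simp only [Pi.add_apply, Pi.smul_apply, smul_eq_mul]
  fin_cases i <;>
    simp [tangentInner, tangentVec, PiLp.inner_apply, Fin.sum_univ_five]

lemma tangentInner_zero_apply (z : EuclideanSpace ℝ (Fin 5)) :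
    tangentInner A₁ A₂ 0 z = ![z 0, z 1, z 2] := by
  simp [tangentInner_apply]

lemma tangentInner_eq_tangentInner_zero (ξ : Fin 3 → ℝ) {z : EuclideanSpace ℝ (Fin 5)}
    (h₃ : z 3 = 0) (h₄ : z 4 = 0) : tangentInner A₁ A₂ ξ z = tangentInner A₁ A₂ 0 z := by
  simp [tangentInner_apply, h₃, h₄]

lemma eq_zero_of_tangentInner_zero_eq_zero {z : EuclideanSpace ℝ (Fin 5)}
    (h : tangentInner A₁ A₂ 0 z = 0) (h₃ : z 3 = 0) (h₄ : z 4 = 0) : z = 0 := by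
  rw [tangentInner_zero_apply] at h
  ext i
  fin_cases i
  exacts [congrFun h 0, congrFun h 1, congrFun h 2, h₃, h₄]

lemma finrank_map_tangentInner_zero_eq {V : Submodule ℝ (EuclideanSpace ℝ (Fin 5))}
    [FiniteDimensional ℝ V] (hV : ∀ z ∈ V, z 3 = 0 ∧ z 4 = 0) :
    finrank ℝ (V.map (tangentInner A₁ A₂ 0)) = finrank ℝ V := by
  rcases V.exists_ne_zero_map_eq_zero_or_finrank_map_eq (tangentInner A₁ A₂ 0) with
    ⟨z, hzV, hz0, hz⟩ | hrank
  · exact absurd (eq_zero_of_tangentInner_zero_eq_zero A₁ A₂ hz (hV z hzV).1 (hV z hzV).2) hz0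
  · exact hrank

lemma tangentInner_eq_zero_of_mem_orthogonal (ξ : Fin 3 → ℝ) {z : EuclideanSpace ℝ (Fin 5)}
    (hz : z ∈ (tangentSpace A₁ A₂ ξ)ᗮ) : tangentInner A₁ A₂ ξ z = 0 := by
  ext i
  exact (Submodule.mem_orthogonal _ z).mp hz _ (Submodule.subset_span ⟨i, rfl⟩)

lemma finrank_map_tangentInner_le (ξ : Fin 3 → ℝ) (V : Submodule ℝ (EuclideanSpace ℝ (Fin 5))) :
    finrank ℝ (V.map (tangentInner A₁ A₂ ξ)) ≤
      finrank ℝ (V.map (tangentSpace A₁ A₂ ξ).orthogonalProjectionOnto.toLinearMap) := by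
  set K := tangentSpace A₁ A₂ ξ
  have hfactor : tangentInner A₁ A₂ ξ =
      (tangentInner A₁ A₂ ξ ∘ₗ K.subtype) ∘ₗ K.orthogonalProjectionOnto.toLinearMap := by
    ext1 z
    rw [← sub_eq_zero]
    simpa using tangentInner_eq_zero_of_mem_orthogonal A₁ A₂ ξ
      (K.sub_starProjection_mem_orthogonal z)
  rw [hfactor, Submodule.map_comp]
  exact Submodule.finrank_map_le _ _

end

namespace NondegCond

variable {A₁ A₂ : Matrix (Fin 3) (Fin 3) ℝ}

lemma exists_cross_ne_zero (hnd : NondegCond A₁ A₂) :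
    ∃ ξ, ((2 : ℝ) • A₁ *ᵥ ξ) ⨯₃ ((2 : ℝ) • A₂ *ᵥ ξ) ≠ 0 := by
  obtain ⟨ξ, hξ⟩ := hnd (Pi.single 0 1) (by simp)
  refine ⟨ξ, fun h => hξ ?_⟩
  change det ![_, _, _] = 0
  rw [← triple_product_eq_det, triple_product_permutation, triple_product_permutation, h,
    dotProduct_zero]

lemma exists_tangentInner_cross_ne_zero (hnd : NondegCond A₁ A₂)
    {v w : EuclideanSpace ℝ (Fin 5)} (hv₃ : v 3 = 1) (hv₄ : v 4 = 0) (hw₃ : w 3 = 0)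
    (hw₄ : w 4 = 1) :
    ∃ ξ, tangentInner A₁ A₂ ξ v ⨯₃ tangentInner A₁ A₂ ξ w ≠ 0 := by
  obtain ⟨ξ, hξ⟩ := hnd.exists_cross_ne_zero
  have hv : ∀ ξ, tangentInner A₁ A₂ ξ v = ![v 0, v 1, v 2] + (2 : ℝ) • A₁ *ᵥ ξ := by
    simp [tangentInner_apply, hv₃, hv₄]
  have hw : ∀ ξ, tangentInner A₁ A₂ ξ w = ![w 0, w 1, w 2] + (2 : ℝ) • A₂ *ᵥ ξ := by
    simp [tangentInner_apply, hw₃, hw₄]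
  by_contra! h
  have hpos := h ξ
  have hneg := h (-ξ)
  have hzero := h 0
  simp only [hv, hw, mulVec_neg, smul_neg, mulVec_zero, smul_zero, add_zero, map_add,
    map_neg, LinearMap.add_apply, LinearMap.neg_apply] at hpos hneg hzero
  have h2 : (2 : ℝ) • ((2 : ℝ) • A₁ *ᵥ ξ) ⨯₃ ((2 : ℝ) • A₂ *ᵥ ξ) = 0 := by
    linear_combination (norm := module) hpos + hneg - (2 : ℝ) • hzero
  exact hξ ((smul_eq_zero.1 h2).resolve_left two_ne_zero)

lemma eq_zero_of_tangentInner_cross_eq_zero (hnd : NondegCond A₁ A₂)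
    {z : EuclideanSpace ℝ (Fin 5)} {e : Fin 3 → ℝ} (he : e ≠ 0)
    (h : ∀ ξ, tangentInner A₁ A₂ ξ z ⨯₃ e = 0) : z 3 = 0 ∧ z 4 = 0 := by
  obtain ⟨ξ, hξ⟩ := hnd e he
  set g₁ := (2 : ℝ) • A₁ *ᵥ ξ
  set g₂ := (2 : ℝ) • A₂ *ᵥ ξ
  have hdet : g₁ ⬝ᵥ g₂ ⨯₃ e ≠ 0 := by rwa [triple_product_eq_det]
  have hg : (z 3 • g₁ + z 4 • g₂) ⨯₃ e = 0 := by
    have : tangentInner A₁ A₂ ξ z - tangentInner A₁ A₂ 0 z = z 3 • g₁ + z 4 • g₂ := by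
      rw [tangentInner_apply, tangentInner_zero_apply]; abel
    rw [← this, map_sub, LinearMap.sub_apply, h, h, sub_zero]
  have h₄ : z 4 * (g₁ ⬝ᵥ g₂ ⨯₃ e) = 0 := by
    simpa [dotProduct_add, dot_self_cross] using congrArg (g₁ ⬝ᵥ ·) hg
  have h₃ : z 3 * (g₂ ⬝ᵥ g₁ ⨯₃ e) = 0 := by
    simpa [dotProduct_add, dot_self_cross] using congrArg (g₂ ⬝ᵥ ·) hg
  rw [triple_product_permutation, ← cross_anticomm, dotProduct_neg, mul_neg, neg_eq_zero] at h₃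
  exact ⟨(mul_eq_zero.1 h₃).resolve_right hdet, (mul_eq_zero.1 h₄).resolve_right hdet⟩

lemma exists_one_lt_finrank_map_tangentInner (hnd : NondegCond A₁ A₂)
    {V : Submodule ℝ (EuclideanSpace ℝ (Fin 5))} (hV : finrank ℝ V = 2) :
    ∃ ξ, 1 < finrank ℝ (V.map (tangentInner A₁ A₂ ξ)) := by
  by_contra! h
  have hcross : ∀ ξ, ∀ z ∈ V, ∀ z' ∈ V,
      tangentInner A₁ A₂ ξ z ⨯₃ tangentInner A₁ A₂ ξ z' = 0 :=
    fun ξ z hz z' hz' => (finrank_span_pair_le_one_iff _ _).1 <| (Submodule.finrank_mono <|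
      Submodule.span_le.2 <| Set.insert_subset (Submodule.mem_map_of_mem hz) <|
        Set.singleton_subset_iff.2 (Submodule.mem_map_of_mem hz')).trans (h ξ)
  have : FiniteDimensional ℝ V := Module.finite_of_finrank_eq_succ hV
  let L : EuclideanSpace ℝ (Fin 5) →ₗ[ℝ] Fin 2 → ℝ :=
    LinearMap.pi ![(EuclideanSpace.proj 3 : EuclideanSpace ℝ (Fin 5) →L[ℝ] ℝ).toLinearMap,
      (EuclideanSpace.proj 4 : EuclideanSpace ℝ (Fin 5) →L[ℝ] ℝ).toLinearMap]
  rcases V.exists_ne_zero_map_eq_zero_or_finrank_map_eq L with ⟨u, huV, hu0, hLu⟩ | hL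
  · have hu₃ : u 3 = 0 := by simpa [L] using congrFun hLu 0
    have hu₄ : u 4 = 0 := by simpa [L] using congrFun hLu 1
    have he : tangentInner A₁ A₂ 0 u ≠ 0 := fun he =>
      hu0 (eq_zero_of_tangentInner_zero_eq_zero A₁ A₂ he hu₃ hu₄)
    have hV₃₄ : ∀ z ∈ V, z 3 = 0 ∧ z 4 = 0 := fun z hz =>
      hnd.eq_zero_of_tangentInner_cross_eq_zero he fun ξ => by
        rw [← tangentInner_eq_tangentInner_zero A₁ A₂ ξ hu₃ hu₄]
        exact hcross ξ z hz u huV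
    have := h 0
    rw [finrank_map_tangentInner_zero_eq A₁ A₂ hV₃₄] at this
    omega
  · have hLtop : V.map L = ⊤ := Submodule.eq_top_of_finrank_eq (by simp [hL, hV])
    obtain ⟨v, hvV, hLv⟩ : Pi.single 0 1 ∈ V.map L := hLtop ▸ Submodule.mem_top
    obtain ⟨w, hwV, hLw⟩ : Pi.single 1 1 ∈ V.map L := hLtop ▸ Submodule.mem_top
    obtain ⟨ξ, hξ⟩ := hnd.exists_tangentInner_cross_ne_zero
      (by simpa [L] using congrFun hLv 0) (by simpa [L] using congrFun hLv 1)
      (by simpa [L] using congrFun hLw 0) (by simpa [L] using congrFun hLw 1)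
    exact hξ (hcross ξ v hvV w hwV)

end NondegCond

noncomputable def tangentInnerPoly (A₁ A₂ : Matrix (Fin 3) (Fin 3) ℝ)
    (z : EuclideanSpace ℝ (Fin 5)) : Fin 3 → MvPolynomial (Fin 3) ℝ :=
  affinePoly ![z 0, z 1, z 2] ((2 * z 3) • A₁ + (2 * z 4) • A₂)

lemma eval_comp_tangentInnerPoly (A₁ A₂ : Matrix (Fin 3) (Fin 3) ℝ) (ξ : Fin 3 → ℝ)
    (z : EuclideanSpace ℝ (Fin 5)) :
    (eval ξ : MvPolynomial (Fin 3) ℝ →+* ℝ) ∘ tangentInnerPoly A₁ A₂ z =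
      tangentInner A₁ A₂ ξ z := by
  rw [tangentInnerPoly, eval_comp_affinePoly, tangentInner_apply, add_mulVec, smul_mulVec,
    smul_mulVec, mul_smul, mul_smul, add_assoc]
  module

theorem stmt13_general (A₁ A₂ : Matrix (Fin 3) (Fin 3) ℝ)
    (hnd : NondegCond A₁ A₂)
    (V : Submodule ℝ (EuclideanSpace ℝ (Fin 5))) (hV : Module.finrank ℝ V = 2) :
    ∃ p : MvPolynomial (Fin 3) ℝ, p ≠ 0 ∧ p.totalDegree ≤ 2 ∧
      ∀ ξ : Fin 3 → ℝ,
        Module.finrank ℝ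
            (V.map (Submodule.orthogonalProjectionOnto (tangentSpace A₁ A₂ ξ)).toLinearMap) ≤ 1 →
          MvPolynomial.eval ξ p = 0 := by
  obtain ⟨ξ₀, hξ₀⟩ := hnd.exists_one_lt_finrank_map_tangentInner hV
  obtain ⟨v, w, rfl⟩ := V.exists_eq_span_pair_of_finrank_eq_two hV
  set P := tangentInnerPoly A₁ A₂
  have heval : ∀ ξ, (eval ξ : MvPolynomial (Fin 3) ℝ →+* ℝ) ∘ (P v ⨯₃ P w) =
      tangentInner A₁ A₂ ξ v ⨯₃ tangentInner A₁ A₂ ξ w := fun ξ => by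
    rw [RingHom.comp_cross, eval_comp_tangentInnerPoly, eval_comp_tangentInnerPoly]
  have hflat : ∀ ξ, finrank ℝ ((Submodule.span ℝ {v, w}).map (tangentInner A₁ A₂ ξ)) ≤ 1 ↔
      tangentInner A₁ A₂ ξ v ⨯₃ tangentInner A₁ A₂ ξ w = 0 := fun ξ => by
    rw [Submodule.map_span, Set.image_pair, finrank_span_pair_le_one_iff]
  obtain ⟨j, hj⟩ := Function.ne_iff.1 (mt (hflat ξ₀).2 hξ₀.not_ge)
  refine ⟨(P v ⨯₃ P w) j, fun hp => hj ?_,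
    totalDegree_cross_le (fun _ => totalDegree_affinePoly_le _ _ _)
      (fun _ => totalDegree_affinePoly_le _ _ _) j, fun ξ hξ => ?_⟩
  · rw [← heval, Function.comp_apply, hp, map_zero, Pi.zero_apply]
  · rw [← Function.comp_apply (f := eval ξ), heval,
      (hflat ξ).1 ((finrank_map_tangentInner_le A₁ A₂ ξ _).trans hξ), Pi.zero_apply]

/-- For a two-dimensional subspace `V ⊂ ℝ⁵`, the set of points `ξ` where the orthogonal
projection of `V` onto the tangent space of the surface at `ξ` has dimension at most 1 is
contained in the zero set of a nonzero polynomial of degree at most 2. -/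
theorem stmt13 (A₁ A₂ : Matrix (Fin 3) (Fin 3) ℝ) (hA₁ : A₁.IsSymm) (hA₂ : A₂.IsSymm)
    (hnd : NondegCond A₁ A₂)
    (V : Submodule ℝ (EuclideanSpace ℝ (Fin 5))) (hV : Module.finrank ℝ V = 2) :
    ∃ p : MvPolynomial (Fin 3) ℝ, p ≠ 0 ∧ p.totalDegree ≤ 2 ∧
      ∀ ξ : Fin 3 → ℝ,
        Module.finrank ℝ
            (V.map (Submodule.orthogonalProjectionOnto (tangentSpace A₁ A₂ ξ)).toLinearMap) ≤ 1 →
          MvPolynomial.eval ξ p = 0 :=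
  stmt13_general A₁ A₂ hnd V hV
end
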